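/- arXiv:1712.07781 — 2 statements merged into one kernel-verified Lean document; each statement's English description precedes it below -/
import Mathlib

section
/- For an outage probability of the form P(Ω) = Σ_{q≥0} Σ_{l=0}^{q+1} c_{q,l} Ω^{l-q-1}, where each term with l = q+1 is a nonzero constant (independent of Ω) and the double series and its termwise derivative converge for large Ω, the finite-SNR diversity gain d_f(Ω) = -(Ω/P(Ω)) P'(Ω) tends to 0 as Ω → ∞. -/
open Filter Finset

private lemma zpow_aux (Ω : ℝ) {q l : ℕ} (hl : l ≤ q + 1) :
    Ω ^ ((l : ℤ) - q - 1) = (Ω ^ (q + 1 - l))⁻¹ := by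
  have h : (l : ℤ) - q - 1 = -((q + 1 - l : ℕ) : ℤ) := by
    push_cast [Nat.cast_sub hl]; ring_nf
  rw [h, zpow_neg, zpow_natCast]

/-- For `P(Ω) = Σ_{q≥0} Σ_{l=0}^{q+1} c_{q,l} Ω^{l-q-1}`, where the terms with
`l = q+1` are constants summing to a nonzero constant `C`, and the double series and its
termwise derivative converge for large `Ω`, the finite-SNR diversity gain
`d_f(Ω) = -(Ω/P(Ω)) P'(Ω)` tends to `0` as `Ω → ∞`. -/
theorem stmt1 (c : ℕ → ℕ → ℝ) (hC : Summable (fun q : ℕ => c q (q + 1)))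
    (hCne : (∑' q : ℕ, c q (q + 1)) ≠ 0) (Ω₀ : ℝ) (hΩ₀ : 0 < Ω₀) (P P' : ℝ → ℝ)
    (hP : ∀ Ω > Ω₀, P Ω = ∑' q : ℕ, ∑ l ∈ range (q + 2), c q l * Ω ^ ((l : ℤ) - q - 1))
    (hconv : ∀ Ω > Ω₀,
      Summable (fun q : ℕ => ∑ l ∈ range (q + 2), |c q l| * Ω ^ ((l : ℤ) - q - 1)))
    (hderiv : ∀ Ω > Ω₀, HasDerivAt P (P' Ω) Ω)
    (hP' : ∀ Ω > Ω₀, P' Ω = ∑' q : ℕ, ∑ l ∈ range (q + 2),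
      c q l * ((l : ℝ) - q - 1) * Ω ^ ((l : ℤ) - q - 2)) :
    Tendsto (fun Ω : ℝ => -Ω * P' Ω / P Ω) atTop (nhds 0) := by
  set Ω₁ : ℝ := Ω₀ + 1 with hΩ₁def
  have hΩ₁ : Ω₀ < Ω₁ := by simp [hΩ₁def]
  have hΩ₁0 : (0:ℝ) < Ω₁ := by linarith
  set B : ℕ → ℝ := fun q => ∑ l ∈ range (q + 2), |c q l| * Ω₁ ^ ((l : ℤ) - q - 1) with hBdef
  have hB : Summable B := hconv Ω₁ hΩ₁
  -- P tends to C
  have hPlim : Tendsto P atTop (nhds (∑' q : ℕ, c q (q + 1))) := by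
    have key : Tendsto (fun Ω : ℝ => ∑' q : ℕ,
        ∑ l ∈ range (q + 2), c q l * Ω ^ ((l : ℤ) - q - 1)) atTop
        (nhds (∑' q : ℕ, c q (q + 1))) := by
      apply tendsto_tsum_of_dominated_convergence hB
      · intro q
        have : c q (q + 1) =
            ∑ l ∈ range (q + 2), (if l = q + 1 then c q (q + 1) else 0) := by
          rw [Finset.sum_ite_eq' (range (q + 2)) (q + 1) (fun _ => c q (q + 1))]
          simp
        rw [this]
        apply tendsto_finset_sum
        intro l hl
        rcases eq_or_ne l (q + 1) with rfl | hne
        · simp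
        · simp only [hne, if_neg, if_false]
          have hlt : (l : ℤ) - q - 1 < 0 := by
            have := Finset.mem_range.mp hl; omega
          simpa using (tendsto_zpow_atTop_zero hlt).const_mul (c q l)
      · filter_upwards [eventually_ge_atTop Ω₁] with Ω hΩ q
        calc ‖∑ l ∈ range (q + 2), c q l * Ω ^ ((l : ℤ) - q - 1)‖
            ≤ ∑ l ∈ range (q + 2), ‖c q l * Ω ^ ((l : ℤ) - q - 1)‖ :=
              norm_sum_le _ _
          _ ≤ B q := by
              apply Finset.sum_le_sum
              intro l hl
              have hl' : l ≤ q + 1 := by have := Finset.mem_range.mp hl; omega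
              rw [Real.norm_eq_abs, abs_mul]
              apply mul_le_mul_of_nonneg_left _ (abs_nonneg _)
              rw [zpow_aux Ω hl', zpow_aux Ω₁ hl',
                abs_of_nonneg (inv_nonneg.mpr (pow_nonneg (le_trans hΩ₁0.le hΩ) _))]
              exact inv_anti₀ (pow_pos hΩ₁0 _)
                (pow_le_pow_left₀ hΩ₁0.le hΩ _)
    exact key.congr' (by
      filter_upwards [eventually_gt_atTop Ω₀] with Ω hΩ
      exact (hP Ω hΩ).symm)
  -- Ω * P' Ω tends to 0
  have hP'lim : Tendsto (fun Ω : ℝ => Ω * P' Ω) atTop (nhds 0) := by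
    have key : Tendsto (fun Ω : ℝ => ∑' q : ℕ,
        ∑ l ∈ range (q + 2), c q l * ((l : ℝ) - q - 1) * Ω ^ ((l : ℤ) - q - 1)) atTop
        (nhds 0) := by
      have h0 : (0:ℝ) = ∑' _ : ℕ, (0:ℝ) := by simp
      rw [h0]
      apply tendsto_tsum_of_dominated_convergence hB
      · intro q
        have : (0:ℝ) = ∑ l ∈ range (q + 2), (0:ℝ) := by simp
        rw [this]
        apply tendsto_finset_sum
        intro l hl
        rcases eq_or_ne l (q + 1) with rfl | hne
        · simp
        · have hlt : (l : ℤ) - q - 1 < 0 := by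
            have := Finset.mem_range.mp hl; omega
          simpa using (tendsto_zpow_atTop_zero hlt).const_mul
            (c q l * ((l : ℝ) - q - 1))
      · filter_upwards [eventually_ge_atTop (2 * Ω₁)] with Ω hΩ q
        have hΩpos : (0:ℝ) < Ω := lt_of_lt_of_le (by linarith) hΩ
        calc ‖∑ l ∈ range (q + 2), c q l * ((l:ℝ) - q - 1) * Ω ^ ((l : ℤ) - q - 1)‖
            ≤ ∑ l ∈ range (q + 2), ‖c q l * ((l:ℝ) - q - 1) * Ω ^ ((l : ℤ) - q - 1)‖ :=
              norm_sum_le _ _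
          _ ≤ B q := by
              apply Finset.sum_le_sum
              intro l hl
              have hl' : l ≤ q + 1 := by have := Finset.mem_range.mp hl; omega
              set k : ℕ := q + 1 - l with hk
              have hcast : |(l:ℝ) - q - 1| = (k : ℝ) := by
                have hle : (l:ℝ) ≤ q + 1 := by exact_mod_cast hl'
                rw [abs_of_nonpos (by linarith)]
                rw [hk]; push_cast [Nat.cast_sub hl']; ring
              rw [Real.norm_eq_abs, abs_mul, abs_mul, hcast, zpow_aux Ω hl',
                zpow_aux Ω₁ hl', ← hk, mul_assoc]
              apply mul_le_mul_of_nonneg_left _ (abs_nonneg _)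
              rw [abs_of_nonneg (inv_nonneg.mpr (pow_nonneg hΩpos.le _))]
              -- k * (Ω^k)⁻¹ ≤ (Ω₁^k)⁻¹
              rw [← div_eq_mul_inv, div_le_iff₀ (pow_pos hΩpos _),
                inv_mul_eq_div, le_div_iff₀ (pow_pos hΩ₁0 _)]
              calc (k:ℝ) * Ω₁ ^ k ≤ (2:ℝ) ^ k * Ω₁ ^ k := by
                    apply mul_le_mul_of_nonneg_right _ (pow_nonneg hΩ₁0.le _)
                    exact_mod_cast (Nat.lt_two_pow_self (n := k)).le
                _ = (2 * Ω₁) ^ k := by rw [mul_pow]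
                _ ≤ Ω ^ k := pow_le_pow_left₀ (by linarith) hΩ _
    apply key.congr'
    filter_upwards [eventually_gt_atTop Ω₀, eventually_gt_atTop 0] with Ω hΩ hΩ0
    rw [hP' Ω hΩ, ← tsum_mul_left]
    congr 1
    ext q
    rw [Finset.mul_sum]
    apply Finset.sum_congr rfl
    intro l hl
    have : Ω * Ω ^ ((l : ℤ) - q - 2) = Ω ^ ((l : ℤ) - q - 1) := by
      have he : (l : ℤ) - q - 1 = ((l : ℤ) - q - 2) + 1 := by ring
      rw [he, zpow_add_one₀ (ne_of_gt hΩ0), mul_comm]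
    rw [← this]; ring
  -- conclude
  have : Tendsto (fun Ω : ℝ => -(Ω * P' Ω) / P Ω) atTop
      (nhds (-(0:ℝ) / (∑' q : ℕ, c q (q + 1)))) :=
    (hP'lim.neg).div hPlim hCne
  simpa [neg_mul] using this
end

section
/- For the Rician power distribution with Rician factor K ≥ 0 and average power Ω > 0, the l-th moment is E[X^l] = Γ(1+l) (Ω/(1+K))^l · ₁F₁(-l, 1; -K) for every nonnegative integer l, where ₁F₁ is the confluent hypergeometric function. -/
open MeasureTheory ProbabilityTheory Real Filter Finset

/-- Modified Bessel function of the first kind, order zero. -/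
noncomputable def besselI0 (z : ℝ) : ℝ :=
  ∑' m : ℕ, (z / 2) ^ (2 * m) / ((Nat.factorial m : ℝ)) ^ 2

/-- Density of the Rician power (scaled noncentral chi-squared) distribution with
Rician factor `K` and average power `Om`. -/
noncomputable def ricianPdf (K Om x : ℝ) : ℝ :=
  if 0 ≤ x then ((K + 1) / Om) * Real.exp (-K - (K + 1) * x / Om) *
    besselI0 (2 * Real.sqrt (K * (K + 1) * x / Om)) else 0

/-- Laguerre polynomial of degree `n` (order zero). -/
noncomputable def laguerreP (n : ℕ) (x : ℝ) : ℝ :=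
  ∑ k ∈ Finset.range (n + 1), (-1 : ℝ) ^ k * (n.choose k : ℝ) * x ^ k / (Nat.factorial k : ℝ)

/-- The coefficient `α(q, Ω, K, γ)` in the Rician power CDF expansion. -/
noncomputable def alphaCoef (q : ℕ) (Om K γ : ℝ) : ℝ :=
  (-1 : ℝ) ^ q * Real.exp (-K) * (laguerreP q K / (Nat.factorial (q + 1) : ℝ)) *
    ((1 + K) * γ / Om) ^ (q + 1)

/-- First-order Marcum Q-function. -/
noncomputable def marcumQ1 (a b : ℝ) : ℝ :=
  ∫ t in Set.Ioi b, t * Real.exp (-(t ^ 2 + a ^ 2) / 2) * besselI0 (a * t)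

/-- The confluent hypergeometric value `₁F₁(-l, 1; -K)` for nonnegative integer `l`. -/
noncomputable def hyp1F1 (l : ℕ) (K : ℝ) : ℝ :=
  ∑ j ∈ Finset.range (l + 1), (l.choose j : ℝ) * K ^ j / (Nat.factorial j : ℝ)

/- ## Auxiliary lemmas -/

lemma fact_one_le (m : ℕ) : (1:ℝ) ≤ (Nat.factorial m : ℝ) := by
  exact_mod_cast Nat.one_le_iff_ne_zero.2 (Nat.factorial_ne_zero m)

lemma besselI0_summable (z : ℝ) :
    Summable (fun m : ℕ => (z / 2) ^ (2 * m) / ((Nat.factorial m : ℝ)) ^ 2) := by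
  apply Summable.of_nonneg_of_le (fun m => by rw [pow_mul]; positivity) (fun m => ?_)
    (Real.summable_pow_div_factorial ((z / 2) ^ 2))
  rw [pow_mul]
  have h1 := fact_one_le m
  gcongr
  nlinarith

lemma besselI0_nonneg (z : ℝ) : 0 ≤ besselI0 z :=
  tsum_nonneg fun m => by rw [pow_mul]; positivity

lemma besselI0_eq_tsum {u : ℝ} (hu : 0 ≤ u) :
    besselI0 (2 * Real.sqrt u) = ∑' m : ℕ, u ^ m / ((Nat.factorial m : ℝ)) ^ 2 := by
  unfold besselI0
  refine tsum_congr fun m => ?_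
  rw [mul_div_cancel_left₀ _ (two_ne_zero (α := ℝ)), pow_mul, Real.sq_sqrt hu]

lemma besselI0_measurable : Measurable besselI0 := by
  apply measurable_of_tendsto_metrizable
    (f := fun n z => ∑ m ∈ Finset.range n, (z / 2) ^ (2 * m) / ((Nat.factorial m : ℝ)) ^ 2)
  · intro n
    exact Finset.measurable_sum _ fun m _ =>
      ((measurable_id.div_const 2).pow_const _).div_const _
  · rw [tendsto_pi_nhds]
    intro z
    exact (besselI0_summable z).hasSum.tendsto_sum_nat

lemma choose_le_two_pow (n k : ℕ) : n.choose k ≤ 2 ^ n := by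
  rcases le_or_gt k n with h | h
  · calc n.choose k ≤ ∑ m ∈ Finset.range (n + 1), n.choose m :=
        Finset.single_le_sum (fun _ _ => Nat.zero_le _) (Finset.mem_range.2 (by omega))
      _ = 2 ^ n := Nat.sum_range_choose n
  · simp [Nat.choose_eq_zero_of_lt h]

lemma integral_pow_mul_exp_neg_mul {c : ℝ} (hc : 0 < c) (n : ℕ) :
    ∫ x in Set.Ioi (0:ℝ), x ^ n * Real.exp (-(c * x)) =
      (Nat.factorial n : ℝ) / c ^ (n + 1) := by
  have h := integral_rpow_mul_exp_neg_mul_Ioi (a := (n : ℝ) + 1) (by positivity) hc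
  have h2 : ∀ x : ℝ, x ^ ((n : ℝ) + 1 - 1) = x ^ n := fun x => by
    rw [add_sub_cancel_right, Real.rpow_natCast]
  simp only [h2] at h
  rw [h, Real.Gamma_nat_eq_factorial]
  have h3 : ((n : ℝ) + 1) = ((n + 1 : ℕ) : ℝ) := by push_cast; ring
  rw [h3, Real.rpow_natCast, one_div, inv_pow, inv_mul_eq_div]

lemma integrableOn_pow_mul_exp_neg_mul {c : ℝ} (hc : 0 < c) (n : ℕ) :
    IntegrableOn (fun x => x ^ n * Real.exp (-(c * x))) (Set.Ioi (0:ℝ)) := by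
  have h := integrableOn_rpow_mul_exp_neg_mul_rpow (s := (n : ℝ)) (p := 1)
    (lt_of_lt_of_le neg_one_lt_zero (Nat.cast_nonneg n)) zero_lt_one hc
  refine h.congr_fun (fun x hx => ?_) measurableSet_Ioi
  dsimp only
  rw [Real.rpow_one, Real.rpow_natCast, neg_mul]

lemma key_sum (l : ℕ) {K : ℝ} (hK : 0 ≤ K) :
    ∑' m : ℕ, K ^ m * (Nat.factorial (l + m) : ℝ) / ((Nat.factorial m : ℝ)) ^ 2
      = Real.exp K * (Nat.factorial l : ℝ) * hyp1F1 l K := by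
  set f : ℕ → ℝ := fun j => (l.choose j : ℝ) * K ^ j / (Nat.factorial j : ℝ) with hf_def
  set g : ℕ → ℝ := fun i => K ^ i / (Nat.factorial i : ℝ) with hg_def
  have hf0 : ∀ j ∉ Finset.range (l + 1), f j = 0 := by
    intro j hj
    have : l < j := by simpa using Finset.mem_range.not.mp hj
    simp [hf_def, Nat.choose_eq_zero_of_lt this]
  have hf : Summable fun j => ‖f j‖ := by
    apply summable_of_ne_finset_zero (s := Finset.range (l + 1))
    intro j hj
    rw [hf0 j hj, norm_zero]
  have hg : Summable fun i => ‖g i‖ :=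
    (Real.summable_pow_div_factorial K).congr fun i =>
      (Real.norm_of_nonneg (by positivity)).symm
  have hcauchy := tsum_mul_tsum_eq_tsum_sum_range_of_summable_norm hf hg
  have htf : ∑' j, f j = hyp1F1 l K := tsum_eq_sum hf0
  have htg : ∑' i, g i = Real.exp K := by
    rw [Real.exp_eq_exp_ℝ, NormedSpace.exp_eq_tsum_div]
  have hinner : ∀ n : ℕ, ∑ k ∈ Finset.range (n + 1), f k * g (n - k)
      = K ^ n * (((l + n).choose n : ℝ)) / (Nat.factorial n : ℝ) := by
    intro n
    have hv : (((l + n).choose n : ℕ) : ℝ)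
        = ∑ k ∈ Finset.range (n + 1), (l.choose k : ℝ) * (n.choose k : ℝ) := by
      rw [Nat.add_choose_eq, Finset.Nat.sum_antidiagonal_eq_sum_range_succ_mk]
      push_cast
      refine Finset.sum_congr rfl fun k hk => ?_
      have hkn : k ≤ n := Nat.lt_succ_iff.mp (Finset.mem_range.mp hk)
      rw [Nat.choose_symm hkn]
    rw [hv, Finset.mul_sum, Finset.sum_div]
    refine Finset.sum_congr rfl fun k hk => ?_
    have hkn : k ≤ n := Nat.lt_succ_iff.mp (Finset.mem_range.mp hk)
    have hKn : K ^ k * K ^ (n - k) = K ^ n := by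
      rw [← pow_add]; congr 1; omega
    have hfact : ((n.choose k : ℝ)) * (Nat.factorial k : ℝ) * (Nat.factorial (n - k) : ℝ)
        = (Nat.factorial n : ℝ) := by
      exact_mod_cast congrArg Nat.cast (Nat.choose_mul_factorial_mul_factorial hkn)
    have hk0 : (Nat.factorial k : ℝ) ≠ 0 := Nat.cast_ne_zero.2 (Nat.factorial_ne_zero k)
    have hnk0 : (Nat.factorial (n - k) : ℝ) ≠ 0 := Nat.cast_ne_zero.2 (Nat.factorial_ne_zero _)
    have hch0 : ((n.choose k : ℝ)) ≠ 0 :=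
      Nat.cast_ne_zero.2 (Nat.choose_pos hkn).ne'
    simp only [hf_def, hg_def]
    rw [← hfact, ← hKn]
    field_simp
  have hfac2 : ∀ m : ℕ, (Nat.factorial (l + m) : ℝ)
      = ((l + m).choose m : ℝ) * (Nat.factorial m : ℝ) * (Nat.factorial l : ℝ) := by
    intro m
    have := Nat.choose_mul_factorial_mul_factorial (Nat.le_add_left m l)
    rw [Nat.add_sub_cancel] at this
    exact_mod_cast congrArg Nat.cast this.symm
  calc ∑' m : ℕ, K ^ m * (Nat.factorial (l + m) : ℝ) / ((Nat.factorial m : ℝ)) ^ 2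
      = ∑' m : ℕ, (Nat.factorial l : ℝ) *
          (K ^ m * (((l + m).choose m : ℝ)) / (Nat.factorial m : ℝ)) := by
        refine tsum_congr fun m => ?_
        have hm0 : (Nat.factorial m : ℝ) ≠ 0 := Nat.cast_ne_zero.2 (Nat.factorial_ne_zero m)
        rw [hfac2 m]
        field_simp
    _ = (Nat.factorial l : ℝ) *
          ∑' m : ℕ, (K ^ m * (((l + m).choose m : ℝ)) / (Nat.factorial m : ℝ)) := tsum_mul_left
    _ = (Nat.factorial l : ℝ) * ∑' n : ℕ, ∑ k ∈ Finset.range (n + 1), f k * g (n - k) := by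
        rw [tsum_congr fun n => (hinner n).symm]
    _ = (Nat.factorial l : ℝ) * ((∑' j, f j) * ∑' i, g i) := by rw [hcauchy]
    _ = Real.exp K * (Nat.factorial l : ℝ) * hyp1F1 l K := by rw [htf, htg]; ring

lemma ricianPdf_nonneg {K Om : ℝ} (hK : 0 ≤ K) (hOm : 0 < Om) (x : ℝ) :
    0 ≤ ricianPdf K Om x := by
  unfold ricianPdf
  split
  · have hb := besselI0_nonneg (2 * Real.sqrt (K * (K + 1) * x / Om))
    have h1 : (0:ℝ) ≤ (K + 1) / Om := by positivity
    exact mul_nonneg (mul_nonneg h1 (Real.exp_pos _).le) hb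
  · exact le_rfl

lemma ricianPdf_measurable (K Om : ℝ) : Measurable (ricianPdf K Om) := by
  have h1 : Measurable fun x : ℝ => ((K + 1) / Om) * Real.exp (-K - (K + 1) * x / Om) *
      besselI0 (2 * Real.sqrt (K * (K + 1) * x / Om)) := by
    refine Measurable.mul (Measurable.mul measurable_const ?_) ?_
    · exact Real.measurable_exp.comp
        (measurable_const.sub ((measurable_id.const_mul (K + 1)).div_const Om))
    · exact besselI0_measurable.comp
        ((Real.continuous_sqrt.measurable.comp
          ((measurable_id.const_mul (K * (K + 1))).div_const Om)).const_mul 2)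
  unfold ricianPdf
  exact Measurable.ite measurableSet_Ici h1 measurable_const

/-- The `m`-th term in the series expansion of `x^l * ricianPdf`. -/
noncomputable def gTerm (K c : ℝ) (l m : ℕ) (x : ℝ) : ℝ :=
  (c * Real.exp (-K) * (K * c) ^ m / ((Nat.factorial m : ℝ)) ^ 2) *
    (x ^ (l + m) * Real.exp (-(c * x)))

lemma gTerm_nonneg {K c : ℝ} (hK : 0 ≤ K) (hc : 0 < c) (l m : ℕ) {x : ℝ} (hx : 0 ≤ x) :
    0 ≤ gTerm K c l m x := by
  unfold gTerm
  exact mul_nonneg (by positivity) (mul_nonneg (pow_nonneg hx _) (Real.exp_pos _).le)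

theorem stmt3 {α : Type*} [MeasurableSpace α] (μ : Measure α) [IsProbabilityMeasure μ]
    (X : α → ℝ) (hXm : Measurable X) (K Om : ℝ) (hK : 0 ≤ K) (hOm : 0 < Om)
    (hlaw : Measure.map X μ = volume.withDensity fun x => ENNReal.ofReal (ricianPdf K Om x))
    (hint : ∀ l : ℕ, Integrable (fun ω => X ω ^ l) μ) :
    ∀ l : ℕ, ∫ ω, X ω ^ l ∂μ = (Nat.factorial l : ℝ) * (Om / (1 + K)) ^ l * hyp1F1 l K := by
  intro l
  have hK1 : (0:ℝ) < K + 1 := by linarith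
  obtain ⟨c, hc_def⟩ : ∃ c : ℝ, c = (K + 1) / Om := ⟨_, rfl⟩
  have hc : 0 < c := hc_def ▸ div_pos hK1 hOm
  have hmeas : Measurable (ricianPdf K Om) := ricianPdf_measurable K Om
  -- Step 1: reduce to an integral over ℝ against the density
  have hstep1 : ∫ ω, X ω ^ l ∂μ = ∫ x : ℝ, x ^ l * ricianPdf K Om x := by
    have h1 : ∫ ω, X ω ^ l ∂μ = ∫ x : ℝ, x ^ l ∂(Measure.map X μ) :=
      (integral_map hXm.aemeasurable ((measurable_id.pow_const l).aestronglyMeasurable)).symm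
    rw [h1, hlaw]
    rw [show (fun x : ℝ => ENNReal.ofReal (ricianPdf K Om x))
        = (fun x : ℝ => ((Real.toNNReal (ricianPdf K Om x) : NNReal) : ENNReal)) from rfl]
    rw [integral_withDensity_eq_integral_smul
      (f := fun x => Real.toNNReal (ricianPdf K Om x))
      (measurable_real_toNNReal.comp hmeas : Measurable fun x => Real.toNNReal (ricianPdf K Om x)) _]
    refine integral_congr_ae (ae_of_all _ fun x => ?_)
    simp only [NNReal.smul_def, Real.coe_toNNReal _ (ricianPdf_nonneg hK hOm x), smul_eq_mul]
    ring
  -- Step 2: restrict to `Ioi 0`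
  have hstep2 : ∫ x : ℝ, x ^ l * ricianPdf K Om x
      = ∫ x in Set.Ioi (0:ℝ), x ^ l * ricianPdf K Om x := by
    rw [← integral_indicator measurableSet_Ioi]
    refine integral_congr_ae ?_
    have h0 : ∀ᵐ x : ℝ, x ≠ 0 := by
      rw [ae_iff]
      have : {x : ℝ | ¬ x ≠ 0} = {0} := by ext y; simp
      rw [this]
      exact measure_singleton 0
    filter_upwards [h0] with x hx
    rcases hx.lt_or_gt with h | h
    · rw [Set.indicator_of_notMem (by simpa using h.le)]
      have : ricianPdf K Om x = 0 := if_neg (not_le.2 h)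
      rw [this, mul_zero]
    · rw [Set.indicator_of_mem (show x ∈ Set.Ioi 0 from h)]
  -- Pointwise series expansion on `Ioi 0`
  have hpt : ∀ x ∈ Set.Ioi (0:ℝ), x ^ l * ricianPdf K Om x = ∑' m : ℕ, gTerm K c l m x := by
    intro x hx
    have hx0 : (0:ℝ) ≤ x := (Set.mem_Ioi.mp hx).le
    have hu : (0:ℝ) ≤ K * (K + 1) * x / Om := by positivity
    have hpdf : ricianPdf K Om x = ((K + 1) / Om) * Real.exp (-K - (K + 1) * x / Om) *
        besselI0 (2 * Real.sqrt (K * (K + 1) * x / Om)) := if_pos hx0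
    have harg : K * (K + 1) * x / Om = K * c * x := by
      rw [hc_def]; ring
    have hexp : Real.exp (-K - (K + 1) * x / Om) = Real.exp (-K) * Real.exp (-(c * x)) := by
      rw [← Real.exp_add]
      congr 1
      rw [hc_def]
      ring
    have hterm : ∀ m : ℕ, gTerm K c l m x
        = (x ^ l * (c * Real.exp (-K) * Real.exp (-(c * x))))
            * ((K * c * x) ^ m / ((Nat.factorial m : ℝ)) ^ 2) := by
      intro m
      unfold gTerm
      rw [mul_pow, pow_add]
      ring
    rw [hpdf, besselI0_eq_tsum hu, harg, hexp, ← hc_def, tsum_congr hterm, tsum_mul_left]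
    ring
  -- Integrability and value of each term
  have hgint : ∀ m : ℕ, IntegrableOn (gTerm K c l m) (Set.Ioi (0:ℝ)) volume := by
    intro m
    exact (integrableOn_pow_mul_exp_neg_mul hc (l + m)).const_mul _
  have hgval : ∀ m : ℕ, ∫ x in Set.Ioi (0:ℝ), gTerm K c l m x
      = (Real.exp (-K) * (1 / c) ^ l)
          * (K ^ m * (Nat.factorial (l + m) : ℝ) / ((Nat.factorial m : ℝ)) ^ 2) := by
    intro m
    unfold gTerm
    rw [integral_const_mul, integral_pow_mul_exp_neg_mul hc (l + m)]
    have hpow : c ^ (l + m + 1) = c ^ l * c ^ m * c := by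
      rw [pow_add, pow_add, pow_one]
    have hm0 : ((Nat.factorial m : ℝ)) ≠ 0 := Nat.cast_ne_zero.2 (Nat.factorial_ne_zero m)
    rw [mul_pow, hpow]
    field_simp [hm0, hc.ne']
    ring
    rw [mul_assoc, ← mul_pow, mul_inv_cancel₀ hc.ne', one_pow, mul_one]
  -- Summability of the term values
  have hb : Summable (fun m : ℕ => K ^ m * (Nat.factorial (l + m) : ℝ)
      / ((Nat.factorial m : ℝ)) ^ 2) := by
    apply Summable.of_nonneg_of_le (fun m => by positivity) (fun m => ?_)
      ((Real.summable_pow_div_factorial (2 * K)).mul_left ((2:ℝ) ^ l * (Nat.factorial l : ℝ)))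
    have h1 : ((Nat.factorial (l + m) : ℝ))
        ≤ 2 ^ (l + m) * (Nat.factorial l : ℝ) * (Nat.factorial m : ℝ) := by
      have h2 := Nat.choose_mul_factorial_mul_factorial (Nat.le_add_left m l)
      rw [Nat.add_sub_cancel] at h2
      have h3 : (Nat.factorial (l + m)) ≤ 2 ^ (l + m) * Nat.factorial l * Nat.factorial m := by
        calc Nat.factorial (l + m) = (l + m).choose m * Nat.factorial m * Nat.factorial l :=
              h2.symm
          _ ≤ 2 ^ (l + m) * Nat.factorial m * Nat.factorial l := by
              have := choose_le_two_pow (l + m) m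
              exact Nat.mul_le_mul_right _ (Nat.mul_le_mul_right _ this)
          _ = 2 ^ (l + m) * Nat.factorial l * Nat.factorial m := by ring
      exact_mod_cast h3
    have hm0 : (0:ℝ) < (Nat.factorial m : ℝ) := by
      exact_mod_cast Nat.factorial_pos m
    calc K ^ m * (Nat.factorial (l + m) : ℝ) / ((Nat.factorial m : ℝ)) ^ 2
        ≤ K ^ m * (2 ^ (l + m) * (Nat.factorial l : ℝ) * (Nat.factorial m : ℝ))
            / ((Nat.factorial m : ℝ)) ^ 2 := by gcongr
      _ = 2 ^ l * (Nat.factorial l : ℝ) * ((2 * K) ^ m / (Nat.factorial m : ℝ)) := by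
          rw [pow_add, mul_pow]
          field_simp
  -- Swap integral and sum
  have hswap : ∫ x in Set.Ioi (0:ℝ), ∑' m : ℕ, gTerm K c l m x
      = ∑' m : ℕ, ∫ x in Set.Ioi (0:ℝ), gTerm K c l m x := by
    refine integral_tsum (fun m => (hgint m).aestronglyMeasurable) ?_
    have hlint : ∀ m : ℕ, ∫⁻ x in Set.Ioi (0:ℝ), ‖gTerm K c l m x‖ₑ
        = ENNReal.ofReal (∫ x in Set.Ioi (0:ℝ), gTerm K c l m x) := by
      intro m
      rw [ofReal_integral_eq_lintegral_ofReal (hgint m)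
        ((ae_restrict_mem measurableSet_Ioi).mono fun x hx =>
          gTerm_nonneg hK hc l m (le_of_lt hx))]
      refine lintegral_congr_ae ?_
      filter_upwards [ae_restrict_mem measurableSet_Ioi] with x hx
      rw [← ofReal_norm, Real.norm_of_nonneg (gTerm_nonneg hK hc l m hx.le)]
    simp only [hlint, hgval]
    rw [← ENNReal.ofReal_tsum_of_nonneg (fun m => by positivity)
      (hb.mul_left (Real.exp (-K) * (1 / c) ^ l))]
    exact ENNReal.ofReal_ne_top
  -- Put everything together
  rw [hstep1, hstep2, setIntegral_congr_fun measurableSet_Ioi hpt, hswap]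
  calc ∑' m : ℕ, ∫ x in Set.Ioi (0:ℝ), gTerm K c l m x
      = ∑' m : ℕ, (Real.exp (-K) * (1 / c) ^ l)
          * (K ^ m * (Nat.factorial (l + m) : ℝ) / ((Nat.factorial m : ℝ)) ^ 2) :=
        tsum_congr hgval
    _ = (Real.exp (-K) * (1 / c) ^ l)
          * ∑' m : ℕ, K ^ m * (Nat.factorial (l + m) : ℝ) / ((Nat.factorial m : ℝ)) ^ 2 :=
        tsum_mul_left
    _ = (Real.exp (-K) * (1 / c) ^ l) * (Real.exp K * (Nat.factorial l : ℝ) * hyp1F1 l K) := by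
        rw [key_sum l hK]
    _ = (Nat.factorial l : ℝ) * (Om / (1 + K)) ^ l * hyp1F1 l K := by
        rw [hc_def, one_div_div, Real.exp_neg, add_comm (1:ℝ) K]
        field_simp [Real.exp_ne_zero]
end
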